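/- Let Φ = (V, 𝒞) be a CNF formula and k ≥ 1. Let T ⊆ V be a sunflower consisting of positive variables with |T| ≥ OPT_{Φ,k} + 1, and let v ∈ T satisfy deg_Φ(v) ≤ deg_Φ(v') for all v' ∈ T. Then there exists Y ⊆ V ∖ {v} with |Y| ≤ k and val_Φ(Y) = OPT_{Φ,k}. -/

import Mathlib

/-!
Take an optimal `Y` containing `v` and replace `v` by some `w ∈ T \ {v}`. Since `w` is positive,
the only clauses lost are clauses of `N(v)` avoiding `w`, i.e. of the petal `N(v) - K`, that were
satisfied by `Y`, while every clause of `N(w)` unsatisfied by `Y` is gained. The petals are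
pairwise disjoint, so fewer than `|T| > OPT ≥ val(Y)` of them meet the clauses satisfied by `Y`:
some petal `N(u) - K` is untouched. If `u = v`, nothing is lost. Otherwise take `w = u`: the loss
is at most `|N(v) - K| ≤ |N(u) - K|` by minimality of `deg(v)`, and all of `N(u) - K` is gained.
-/

/-- `Y` satisfies clause `C = (pos, neg)` iff `pos ∩ Y ≠ ∅` or `neg ⊈ Y`. -/
def ClauseSat {α : Type*} [DecidableEq α] (Y : Finset α) (C : Finset α × Finset α) : Prop :=
  (C.1 ∩ Y).Nonempty ∨ ¬ C.2 ⊆ Y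

instance {α : Type*} [DecidableEq α] (Y : Finset α) (C : Finset α × Finset α) :
    Decidable (ClauseSat Y C) := by
  unfold ClauseSat; infer_instance

/-- `val Φ Y`: number of clause occurrences (with multiplicity) satisfied by `Y`. -/
def cnfVal {α : Type*} [DecidableEq α] (𝒞 : Multiset (Finset α × Finset α))
    (Y : Finset α) : ℕ :=
  Multiset.countP (fun C => ClauseSat Y C) 𝒞

/-- `OPT_{Φ,k}`: maximum of `val` over solutions `Y ⊆ V` with `|Y| ≤ k`. -/
def cnfOPT {α : Type*} [DecidableEq α] (V : Finset α)
    (𝒞 : Multiset (Finset α × Finset α)) (k : ℕ) : ℕ :=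
  (V.powerset.filter (fun Y => Y.card ≤ k)).sup (cnfVal 𝒞)

/-- `N_Φ(v)`: the multiset of clause occurrences of `𝒞` containing `v`. -/
def cnfNbhd {α : Type*} [DecidableEq α] (𝒞 : Multiset (Finset α × Finset α))
    (v : α) : Multiset (Finset α × Finset α) :=
  𝒞.filter (fun C => v ∈ C.1 ∪ C.2)

/-- `deg_Φ(v)`: number of clause occurrences (with multiplicity) containing `v`. -/
def cnfDeg {α : Type*} [DecidableEq α] (𝒞 : Multiset (Finset α × Finset α)) (v : α) : ℕ :=
  Multiset.card (cnfNbhd 𝒞 v)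

/-- `T` is a sunflower: there is a core `K` (a multiset of clause occurrences)
with `N_Φ(v) ∩ N_Φ(v') = K` for all distinct `v, v' ∈ T`. -/
def cnfSunflower {α : Type*} [DecidableEq α] (𝒞 : Multiset (Finset α × Finset α))
    (T : Finset α) : Prop :=
  ∃ K : Multiset (Finset α × Finset α),
    ∀ v ∈ T, ∀ v' ∈ T, v ≠ v' → cnfNbhd 𝒞 v ∩ cnfNbhd 𝒞 v' = K

namespace Multiset

variable {α ι : Type*}

theorem countP_mono_left {p q : α → Prop} [DecidablePred p] [DecidablePred q] {s : Multiset α}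
    (h : ∀ a ∈ s, p a → q a) : countP p s ≤ countP q s := by
  induction s using Quot.inductionOn with
  | h l => simpa using List.countP_mono_left (by simpa using h)

theorem countP_le_countP_of_countP_and_not_le {p q : α → Prop} [DecidablePred p]
    [DecidablePred q] {s : Multiset α}
    (h : countP (fun a => p a ∧ ¬q a) s ≤ countP (fun a => q a ∧ ¬p a) s) :
    countP p s ≤ countP q s := by
  rw [countP_eq_countP_filter_add s p q, countP_eq_countP_filter_add s q p]
  simp only [countP_filter]
  have hpq : countP (fun a => p a ∧ q a) s = countP (fun a => q a ∧ p a) s :=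
    countP_congr rfl fun _ _ => propext and_comm
  omega

variable [DecidableEq α]

theorem disjoint_sub_sub (s t : Multiset α) : Disjoint (s - t) (t - s) := by
  rw [← inter_eq_zero_iff_disjoint]
  ext a
  simp only [count_inter, count_sub, count_zero]
  omega

theorem exists_eq_zero_of_disjoint_of_card_lt {T : Finset ι} {f : ι → Multiset α} {S : Multiset α}
    (hd : ∀ x ∈ T, ∀ y ∈ T, x ≠ y → Disjoint (f x) (f y)) (hS : ∀ i ∈ T, f i ≤ S)
    (hcard : card S < T.card) : ∃ i ∈ T, f i = 0 := by
  by_contra! hne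
  have hsum : ∑ i ∈ T, f i ≤ S := finsetSum_eq_sup_iff_disjoint.mpr hd ▸ Finset.sup_le hS
  have hT : T.card ≤ card (∑ i ∈ T, f i) := by
    rw [card_sum]
    exact (Finset.card_eq_sum_ones T).trans_le
      (Finset.sum_le_sum fun i hi => card_pos.mpr (hne i hi))
  exact hcard.not_ge (hT.trans (card_le_card hsum))

end Multiset

open Multiset

section CNF

variable {α : Type*} [DecidableEq α]

theorem cnfVal_le_cnfOPT {V Y : Finset α} {𝒞 : Multiset (Finset α × Finset α)} {k : ℕ}
    (hYV : Y ⊆ V) (hYk : Y.card ≤ k) : cnfVal 𝒞 Y ≤ cnfOPT V 𝒞 k :=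
  Finset.le_sup (by simp [hYV, hYk])

theorem exists_cnfVal_eq_cnfOPT (V : Finset α) (𝒞 : Multiset (Finset α × Finset α)) (k : ℕ) :
    ∃ Y ⊆ V, Y.card ≤ k ∧ cnfVal 𝒞 Y = cnfOPT V 𝒞 k := by
  obtain ⟨Y, hY, hopt⟩ :=
    (V.powerset.filter (·.card ≤ k)).exists_mem_eq_sup ⟨∅, by simp⟩ (cnfVal 𝒞)
  rw [Finset.mem_filter, Finset.mem_powerset] at hY
  exact ⟨Y, hY.1, hY.2, hopt.symm⟩

theorem cnfNbhd_sub_cnfNbhd (𝒞 : Multiset (Finset α × Finset α)) (v w : α) :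
    cnfNbhd 𝒞 v - cnfNbhd 𝒞 w = 𝒞.filter (fun C => v ∈ C.1 ∪ C.2 ∧ w ∉ C.1 ∪ C.2) := by
  ext C
  simp only [cnfNbhd, count_sub, count_filter]
  split_ifs <;> simp_all

theorem clauseSat_of_mem_of_mem {Y : Finset α} {C : Finset α × Finset α} {w : α}
    (hwC : w ∈ C.1) (hwY : w ∈ Y) : ClauseSat Y C :=
  Or.inl ⟨w, Finset.mem_inter.mpr ⟨hwC, hwY⟩⟩

theorem mem_of_clauseSat_of_not_clauseSat_insert_erase {Y : Finset α}
    {C : Finset α × Finset α} {v w : α} (hw : w ∉ C.2) (hY : ClauseSat Y C)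
    (hY' : ¬ ClauseSat (insert w (Y.erase v)) C) : v ∈ C.1 ∧ w ∉ C.1 ∪ C.2 := by
  simp only [ClauseSat, not_or, not_not] at hY'
  obtain ⟨hpos, hneg⟩ := hY'
  have hwC : w ∉ C.1 := fun h => hpos ⟨w, by simp [h]⟩
  refine ⟨?_, by simp [hwC, hw]⟩
  have hC2 : C.2 ⊆ Y := fun x hx => Finset.mem_of_mem_erase
    ((Finset.mem_insert.mp (hneg hx)).resolve_left (by rintro rfl; exact hw hx))
  obtain ⟨x, hx⟩ := hY.resolve_right (not_not.mpr hC2)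
  rw [Finset.mem_inter] at hx
  by_contra hv
  exact hpos ⟨x, by simp [hx.1, hx.2, ne_of_mem_of_not_mem hx.1 hv]⟩

theorem cnfVal_le_cnfVal_insert_erase {𝒞 : Multiset (Finset α × Finset α)} {Y : Finset α}
    {v w : α} (hw : ∀ C ∈ 𝒞, w ∉ C.2)
    (h : card ((cnfNbhd 𝒞 v - cnfNbhd 𝒞 w).filter (ClauseSat Y)) ≤
      card ((cnfNbhd 𝒞 w).filter (¬ ClauseSat Y ·))) :
    cnfVal 𝒞 Y ≤ cnfVal 𝒞 (insert w (Y.erase v)) := by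
  set Y' := insert w (Y.erase v)
  refine countP_le_countP_of_countP_and_not_le ?_
  rw [cnfNbhd_sub_cnfNbhd, cnfNbhd, filter_filter, filter_filter, ← countP_eq_card_filter,
    ← countP_eq_card_filter] at h
  calc countP (fun C => ClauseSat Y C ∧ ¬ ClauseSat Y' C) 𝒞
      ≤ countP (fun C => ClauseSat Y C ∧ v ∈ C.1 ∪ C.2 ∧ w ∉ C.1 ∪ C.2) 𝒞 :=
        countP_mono_left fun C hC ⟨hY, hY'⟩ => by
          obtain ⟨hv, hw⟩ := mem_of_clauseSat_of_not_clauseSat_insert_erase (hw C hC) hY hY'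
          exact ⟨hY, Finset.mem_union_left _ hv, hw⟩
    _ ≤ countP (fun C => ¬ ClauseSat Y C ∧ w ∈ C.1 ∪ C.2) 𝒞 := h
    _ ≤ countP (fun C => ClauseSat Y' C ∧ ¬ ClauseSat Y C) 𝒞 :=
        countP_mono_left fun C hC ⟨hY, hwC⟩ => by
          refine ⟨clauseSat_of_mem_of_mem ?_ (Finset.mem_insert_self w _), hY⟩
          exact (Finset.mem_union.mp hwC).resolve_right (hw C hC)

/-- The petals `N(u) - K` are pairwise disjoint, so one of them contains no clause satisfied by
`Y`; its variable, or any other one if it is `v` itself, is the partner `w`. -/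
theorem exists_swap_partner {𝒞 : Multiset (Finset α × Finset α)} {T Y : Finset α}
    {K : Multiset (Finset α × Finset α)} {v : α}
    (hK : ∀ u ∈ T, ∀ u' ∈ T, u ≠ u' → cnfNbhd 𝒞 u ∩ cnfNbhd 𝒞 u' = K)
    (hvT : v ∈ T) (hvmin : ∀ v' ∈ T, cnfDeg 𝒞 v ≤ cnfDeg 𝒞 v')
    (hT : 1 < T.card) (hval : cnfVal 𝒞 Y < T.card) :
    ∃ w ∈ T, w ≠ v ∧ card ((cnfNbhd 𝒞 v - cnfNbhd 𝒞 w).filter (ClauseSat Y)) ≤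
      card ((cnfNbhd 𝒞 w).filter (¬ ClauseSat Y ·)) := by
  have hpetal : ∀ u ∈ T, ∀ u' ∈ T, u ≠ u' →
      cnfNbhd 𝒞 u - K = cnfNbhd 𝒞 u - cnfNbhd 𝒞 u' := fun u hu u' hu' h =>
    hK u hu u' hu' h ▸ sub_inter _ _
  obtain ⟨u, huT, hu⟩ : ∃ u ∈ T, (cnfNbhd 𝒞 u - K).filter (ClauseSat Y) = 0 := by
    refine exists_eq_zero_of_disjoint_of_card_lt (S := 𝒞.filter (ClauseSat Y)) ?_ ?_ ?_
    · intro x hx y hy hxy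
      rw [hpetal x hx y hy hxy, hpetal y hy x hx hxy.symm]
      exact (disjoint_sub_sub _ _).mono (filter_le _ _) (filter_le _ _)
    · exact fun u _ => filter_le_filter _ (tsub_le_self.trans (filter_le _ _))
    · rwa [← countP_eq_card_filter]
  by_cases huv : u = v
  · obtain ⟨w, hwT, hwv⟩ := Finset.exists_mem_ne hT v
    refine ⟨w, hwT, hwv, ?_⟩
    rw [← hpetal v hvT w hwT hwv.symm, ← huv, hu, card_zero]
    exact Nat.zero_le _
  · refine ⟨u, huT, huv, ?_⟩
    have hKvu := hK v hvT u huT (Ne.symm huv)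
    rw [← hpetal v hvT u huT (Ne.symm huv)]
    calc card ((cnfNbhd 𝒞 v - K).filter (ClauseSat Y))
        ≤ card (cnfNbhd 𝒞 v - K) := card_le_card (filter_le _ _)
      _ ≤ card (cnfNbhd 𝒞 u - K) := by
        rw [card_sub (hKvu ▸ inter_le_left), card_sub (hKvu ▸ inter_le_right)]
        exact Nat.sub_le_sub_right (hvmin u huT) _
      _ = card ((cnfNbhd 𝒞 u - K).filter (¬ ClauseSat Y ·)) := by
        rw [← sub_filter_eq_filter_not, hu, tsub_zero]
      _ ≤ card ((cnfNbhd 𝒞 u).filter (¬ ClauseSat Y ·)) :=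
        card_le_card (filter_le_filter _ tsub_le_self)

end CNF

theorem stmt_12_general {α : Type*} [DecidableEq α] (V : Finset α)
    (𝒞 : Multiset (Finset α × Finset α))
    (k : ℕ)
    (T : Finset α) (hTV : T ⊆ V)
    (hTpos : ∀ u ∈ T, ∀ C ∈ 𝒞, u ∉ C.2)
    (hTsun : cnfSunflower 𝒞 T)
    (hTcard : T.card ≥ cnfOPT V 𝒞 k + 1)
    (v : α) (hvT : v ∈ T) (hvmin : ∀ v' ∈ T, cnfDeg 𝒞 v ≤ cnfDeg 𝒞 v') :
    ∃ Y ⊆ V \ {v}, Y.card ≤ k ∧ cnfVal 𝒞 Y = cnfOPT V 𝒞 k := by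
  obtain ⟨Y, hYV, hYk, hYopt⟩ := exists_cnfVal_eq_cnfOPT V 𝒞 k
  suffices ∃ Y' ⊆ V \ {v}, Y'.card ≤ k ∧ cnfVal 𝒞 Y ≤ cnfVal 𝒞 Y' by
    obtain ⟨Y', hY'V, hY'k, hle⟩ := this
    exact ⟨Y', hY'V, hY'k,
      (cnfVal_le_cnfOPT (hY'V.trans Finset.sdiff_subset) hY'k).antisymm (hYopt ▸ hle)⟩
  by_cases hvY : v ∈ Y
  swap
  · exact ⟨Y, Finset.subset_sdiff.mpr ⟨hYV, Finset.disjoint_singleton_right.mpr hvY⟩, hYk, le_rfl⟩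
  rcases Nat.eq_zero_or_pos (cnfVal 𝒞 Y) with hzero | hpos
  · exact ⟨∅, Finset.empty_subset _, Nat.zero_le _, hzero ▸ Nat.zero_le _⟩
  obtain ⟨K, hK⟩ := hTsun
  obtain ⟨w, hwT, hwv, hswap⟩ := exists_swap_partner (Y := Y) hK hvT hvmin (by omega) (by omega)
  refine ⟨insert w (Y.erase v), ?_, ?_, cnfVal_le_cnfVal_insert_erase (hTpos w hwT) hswap⟩
  · rw [Finset.insert_subset_iff, Finset.erase_eq]
    exact ⟨by simp [hTV hwT, hwv], Finset.sdiff_subset_sdiff hYV le_rfl⟩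
  · exact (Finset.card_insert_le _ _).trans ((Finset.card_erase_add_one hvY).trans_le hYk)

/-- deleting the minimum-degree variable of a large sunflower of
positive variables does not change the optimum. -/
theorem stmt_12 {α : Type*} [DecidableEq α] (V : Finset α)
    (𝒞 : Multiset (Finset α × Finset α))
    (h𝒞 : ∀ C ∈ 𝒞, C.1 ⊆ V ∧ C.2 ⊆ V)
    (k : ℕ) (hk : 1 ≤ k)
    (T : Finset α) (hTV : T ⊆ V)
    (hTpos : ∀ u ∈ T, ∀ C ∈ 𝒞, u ∉ C.2)
    (hTsun : cnfSunflower 𝒞 T)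
    (hTcard : T.card ≥ cnfOPT V 𝒞 k + 1)
    (v : α) (hvT : v ∈ T) (hvmin : ∀ v' ∈ T, cnfDeg 𝒞 v ≤ cnfDeg 𝒞 v') :
    ∃ Y ⊆ V \ {v}, Y.card ≤ k ∧ cnfVal 𝒞 Y = cnfOPT V 𝒞 k :=
  stmt_12_general V 𝒞 k T hTV hTpos hTsun hTcard v hvT hvmin
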